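/- arXiv:2402.10934 — 4 statements merged into one kernel-verified Lean document; each statement's English description precedes it below -/
import Mathlib

section
/- Let p be a nonzero real number, n an integer, and r a positive real number, and suppose (2n+1)·π/p lies in the interval (−π, π]. Then, using principal-branch complex powers (cpow), ((r : ℂ))^p + (r · exp((2n+1)·π·I/p))^p = 0; that is, r·exp((2n+1)πI/p) is a Hölder–Minkowski inverse of r for the operation x₀, x₁ ↦ (x₀^p + x₁^p)^(1/p). -/
open Complex

open scoped Real

namespace Complex

theorem cpow_ofReal_mul_exp_mul_I {r θ : ℝ} (hr : 0 < r) (hθ : θ ∈ Set.Ioc (-π) π) (w : ℂ) :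
    ((r : ℂ) * exp (θ * I)) ^ w = (r : ℂ) ^ w * exp (θ * I * w) := by
  have hr0 : (r : ℂ) ≠ 0 := ofReal_ne_zero.mpr hr.ne'
  have hlog : log (exp (θ * I)) = θ * I := log_exp (by simpa using hθ.1) (by simpa using hθ.2)
  rw [cpow_def_of_ne_zero (mul_ne_zero hr0 (exp_ne_zero _)), log_ofReal_mul hr (exp_ne_zero _),
    hlog, add_mul, exp_add, cpow_def_of_ne_zero hr0, ofReal_log hr.le]

theorem exp_odd_mul_pi_mul_I (n : ℤ) : exp ((2 * n + 1) * π * I) = -1 := by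
  rw [show (2 * n + 1) * π * I = n * (2 * π * I) + π * I by ring, exp_add,
    exp_int_mul_two_pi_mul_I, exp_pi_mul_I, one_mul]

end Complex

/-- Hölder–Minkowski inverse: for nonzero real `p`, an integer `n`, and positive real `r`,
if `(2n+1)π/p ∈ (-π, π]` then, with principal-branch complex powers,
`r^p + (r·exp((2n+1)πI/p))^p = 0`. -/
theorem holder_minkowski_inverse
    (p : ℝ) (n : ℤ) (r : ℝ) (hp : p ≠ 0) (hr : 0 < r)
    (hθ : (2 * (n : ℝ) + 1) * Real.pi / p ∈ Set.Ioc (-Real.pi) Real.pi) :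
    ((r : ℂ)) ^ (p : ℂ) +
      ((r : ℂ) * Complex.exp ((2 * (n : ℂ) + 1) * (Real.pi : ℂ) * Complex.I / (p : ℂ)))
        ^ (p : ℂ) = 0 := by
  set θ : ℝ := (2 * n + 1) * π / p with hθ_def
  have h_exponent : (2 * (n : ℂ) + 1) * π * I / p = θ * I := by
    rw [hθ_def]; push_cast; ring
  have h_turn : (θ : ℂ) * I * p = (2 * n + 1) * π * I := by
    have hp' : (p : ℂ) ≠ 0 := ofReal_ne_zero.mpr hp
    rw [hθ_def]; push_cast; field_simp
  rw [h_exponent, cpow_ofReal_mul_exp_mul_I hr hθ, h_turn, exp_odd_mul_pi_mul_I]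
  ring
end

section
/- Let x₀, x₁, a₀, a₁ be positive real numbers. Then, as the nonzero real parameter p tends to 0, the projected Hölder–Minkowski average ((a₀^p · x₀^p + a₁^p · x₁^p)/(a₀^p + a₁^p))^(1/p) tends to x₀^(1/2) · x₁^(1/2) = √(x₀·x₁), where all powers are real powers (rpow) and the limit is taken along p → 0 with p ≠ 0. -/
/-!
Write `F p = (∑ aᵢ^p xᵢ^p) / (∑ aᵢ^p)`, so that the average is `F p ^ (1/p) = exp (log (F p) / p)`.
Since `F 0 = 1`, the exponent `log (F p) / p` is a difference quotient of `log ∘ F` at `0` and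
tends to `F'(0)`. Differentiating the quotient, the weights cancel:
`F'(0) = (∑ (log aᵢ + log xᵢ) - ∑ log aᵢ) / n = (∑ log xᵢ) / n` with `n` the number of terms,
whence the unweighted geometric mean.
-/

open Filter Topology Real

theorem tendsto_rpow_one_div_of_hasDerivAt {f : ℝ → ℝ} {d : ℝ} (hf : HasDerivAt f d 0)
    (hf₀ : f 0 = 1) :
    Tendsto (fun p : ℝ => f p ^ (1 / p)) (𝓝[≠] 0) (𝓝 (exp d)) := by
  have hlog : HasDerivAt (fun p => log (f p)) d 0 := by
    simpa [hf₀] using hf.log (by simp [hf₀])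
  have hslope : Tendsto (fun p => p⁻¹ * log (f p)) (𝓝[≠] 0) (𝓝 d) := by
    refine (hasDerivAt_iff_tendsto_slope.mp hlog).congr fun p => ?_
    simp [slope_def_field, hf₀, div_eq_inv_mul]
  have hpos : ∀ᶠ p in 𝓝[≠] (0 : ℝ), 0 < f p :=
    nhdsWithin_le_nhds (hf.continuousAt.eventually (lt_mem_nhds (by simp [hf₀])))
  refine ((continuous_exp.tendsto d).comp hslope).congr' ?_
  filter_upwards [hpos] with p hp
  rw [Function.comp_apply, rpow_def_of_pos hp, one_div, mul_comm]

section
variable {ι : Type*} [Fintype ι] [Nonempty ι] {a x : ι → ℝ}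

theorem hasDerivAt_sum_rpow_mul_div_sum_rpow (ha : ∀ i, 0 < a i) (hx : ∀ i, 0 < x i) :
    HasDerivAt (fun p : ℝ => (∑ i, a i ^ p * x i ^ p) / ∑ i, a i ^ p)
      ((∑ i, log (x i)) / Fintype.card ι) 0 := by
  have hpow (b : ℝ) (hb : 0 < b) : HasDerivAt (fun p : ℝ => b ^ p) (log b) 0 := by
    simpa using (hasStrictDerivAt_const_rpow hb 0).hasDerivAt
  have hnum := HasDerivAt.fun_sum fun i (_ : i ∈ Finset.univ) =>
    (hpow _ (ha i)).mul (hpow _ (hx i))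
  have hden := HasDerivAt.fun_sum fun i (_ : i ∈ Finset.univ) => hpow _ (ha i)
  refine (hnum.div hden (by simp)).congr_deriv ?_
  simp only [rpow_zero, mul_one, one_mul, Finset.sum_add_distrib, Finset.sum_const,
    Finset.card_univ, nsmul_eq_mul, Pi.mul_apply]
  field_simp
  ring

theorem tendsto_sum_rpow_mul_div_sum_rpow_rpow_one_div (ha : ∀ i, 0 < a i)
    (hx : ∀ i, 0 < x i) :
    Tendsto (fun p : ℝ => ((∑ i, a i ^ p * x i ^ p) / ∑ i, a i ^ p) ^ (1 / p)) (𝓝[≠] 0)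
      (𝓝 (∏ i, x i ^ (1 / (Fintype.card ι : ℝ)))) := by
  have hcard : (Fintype.card ι : ℝ) ≠ 0 := by simp
  convert tendsto_rpow_one_div_of_hasDerivAt (hasDerivAt_sum_rpow_mul_div_sum_rpow ha hx)
    (by simp [hcard]) using 2
  rw [Finset.sum_div, exp_sum]
  refine Finset.prod_congr rfl fun i _ => ?_
  rw [rpow_def_of_pos (hx i), mul_one_div]

end

/-- As the nonzero real parameter `p` tends to `0`, the projected Hölder–Minkowski
average tends to the unweighted geometric mean `x₀^(1/2) · x₁^(1/2)`, regardless of the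
positive weights `a₀, a₁`. -/
theorem holder_minkowski_tendsto_geometric_mean
    (x₀ x₁ a₀ a₁ : ℝ) (hx₀ : 0 < x₀) (hx₁ : 0 < x₁) (ha₀ : 0 < a₀) (ha₁ : 0 < a₁) :
    Tendsto
      (fun p : ℝ => ((a₀ ^ p * x₀ ^ p + a₁ ^ p * x₁ ^ p) / (a₀ ^ p + a₁ ^ p)) ^ (1 / p))
      (nhdsWithin 0 {0}ᶜ)
      (nhds (x₀ ^ ((1 : ℝ) / 2) * x₁ ^ ((1 : ℝ) / 2))) := by
  simpa [Fin.sum_univ_two, Fin.prod_univ_two] using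
    tendsto_sum_rpow_mul_div_sum_rpow_rpow_one_div (a := ![a₀, a₁]) (x := ![x₀, x₁])
      (Fin.forall_fin_two.2 ⟨ha₀, ha₁⟩) (Fin.forall_fin_two.2 ⟨hx₀, hx₁⟩)
end

section
/- Let c be a real number with c ≥ −1. Then, as the real parameter p tends to +∞, the quantity ((((c+1)^p + 1)^(1/p)) − 1)/(((2^p + 1)^(1/p)) − 1) tends to max(c, 0), where all powers are real powers (rpow). -/
/-!
The `p`-mean `(a^p + b^p)^(1/p)` of two nonnegative numbers is squeezed between `max a b` and
`2^(1/p) * max a b`, so it tends to `max a b` as `p → ∞`. With `b = 1`, the numerator tends to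
`max (c + 1) 1 - 1 = max c 0` and the denominator to `max 2 1 - 1 = 1`.
-/

open Filter Topology

lemma tendsto_const_rpow_one_div_atTop {x : ℝ} (hx : 0 < x) :
    Tendsto (fun p : ℝ => x ^ (1 / p)) atTop (𝓝 1) := by
  have h : Tendsto (fun p : ℝ => 1 / p) atTop (𝓝 0) := by
    simpa only [one_div] using tendsto_inv_atTop_zero
  simpa only [Real.rpow_zero, Function.comp_def] using
    ((Real.continuousAt_const_rpow hx.ne').tendsto).comp h

lemma rpow_add_rpow_one_div_mem_Icc {a b p : ℝ} (ha : 0 ≤ a) (hb : 0 ≤ b) (hba : b ≤ a)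
    (hp : 0 < p) :
    (a ^ p + b ^ p) ^ (1 / p) ∈ Set.Icc a (2 ^ (1 / p) * a) := by
  have hap : 0 ≤ a ^ p := Real.rpow_nonneg ha p
  have hbp : 0 ≤ b ^ p := Real.rpow_nonneg hb p
  have hroot : (a ^ p) ^ (1 / p) = a := by
    rw [one_div, Real.rpow_rpow_inv ha hp.ne']
  constructor
  · calc a = (a ^ p) ^ (1 / p) := hroot.symm
      _ ≤ (a ^ p + b ^ p) ^ (1 / p) := by gcongr; linarith
  · calc (a ^ p + b ^ p) ^ (1 / p) ≤ (2 * a ^ p) ^ (1 / p) := by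
          gcongr
          linarith [Real.rpow_le_rpow hb hba hp.le]
      _ = 2 ^ (1 / p) * a := by rw [Real.mul_rpow zero_le_two hap, hroot]

lemma tendsto_rpow_add_rpow_one_div_atTop {a b : ℝ} (ha : 0 ≤ a) (hb : 0 ≤ b) :
    Tendsto (fun p : ℝ => (a ^ p + b ^ p) ^ (1 / p)) atTop (𝓝 (max a b)) := by
  wlog hba : b ≤ a generalizing a b
  · simpa only [add_comm, max_comm] using this hb ha (le_of_not_ge hba)
  rw [max_eq_left hba]
  have hupper : Tendsto (fun p : ℝ => 2 ^ (1 / p) * a) atTop (𝓝 a) := by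
    simpa only [one_mul] using (tendsto_const_rpow_one_div_atTop two_pos).mul_const a
  have hbounds := fun p (hp : 0 < p) => rpow_add_rpow_one_div_mem_Icc ha hb hba hp
  exact tendsto_of_tendsto_of_tendsto_of_le_of_le' tendsto_const_nhds hupper
    (eventually_gt_atTop 0 |>.mono fun p hp => (hbounds p hp).1)
    (eventually_gt_atTop 0 |>.mono fun p hp => (hbounds p hp).2)

lemma tendsto_rpow_add_one_one_div_atTop {a : ℝ} (ha : 0 ≤ a) :
    Tendsto (fun p : ℝ => (a ^ p + 1) ^ (1 / p)) atTop (𝓝 (max a 1)) := by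
  simpa only [Real.one_rpow] using tendsto_rpow_add_rpow_one_div_atTop ha zero_le_one

/-- The smooth approximation of the clamped illumination term: for `c ≥ -1`,
`((((c+1)^p + 1)^(1/p)) - 1)/(((2^p + 1)^(1/p)) - 1)` tends to `max c 0` as `p → ∞`. -/
theorem smooth_clamp_tendsto_max
    (c : ℝ) (hc : -1 ≤ c) :
    Tendsto
      (fun p : ℝ => ((((c + 1) ^ p + 1) ^ (1 / p)) - 1) /
        ((((2 : ℝ) ^ p + 1) ^ (1 / p)) - 1))
      atTop (nhds (max c 0)) := by
  have hnum := (tendsto_rpow_add_one_one_div_atTop (by linarith : 0 ≤ c + 1)).sub_const 1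
  have hden := (tendsto_rpow_add_one_one_div_atTop zero_le_two).sub_const 1
  have hlim_num : max (c + 1) 1 - 1 = max c 0 := by
    rw [← max_sub_sub_right, add_sub_cancel_right, sub_self]
  have hlim_den : max (2 : ℝ) 1 - 1 = 1 := by norm_num
  rw [hlim_num] at hnum
  rw [hlim_den] at hden
  simpa only [div_one, Pi.div_def] using hnum.div hden one_ne_zero
end

section
/- Let p be a nonzero real number, A and B positive real numbers, and θ a real number such that both θ and p·θ lie in the interval (−π, π]. Then, using principal-branch complex powers (cpow), (((A : ℂ)·exp(I·θ))^p + ((B : ℂ)·exp(I·θ))^p)^(1/p) = ((A^p + B^p)^(1/p) : ℂ) · exp(I·θ), where A^p + B^p and its (1/p)-th power are real powers (rpow) of positive reals. -/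
open Complex

namespace Complex

theorem exp_cpow {z : ℂ} (h₁ : -Real.pi < z.im) (h₂ : z.im ≤ Real.pi) (w : ℂ) :
    exp z ^ w = exp (z * w) := by
  rw [cpow_def_of_ne_zero (exp_ne_zero z), log_exp h₁ h₂]

theorem ofReal_mul_cpow {r : ℝ} (hr : 0 ≤ r) (z w : ℂ) :
    ((r : ℂ) * z) ^ w = (r : ℂ) ^ w * z ^ w := by
  rcases hr.eq_or_lt with rfl | hr
  · rcases eq_or_ne w 0 with rfl | hw
    · simp
    · simp [zero_cpow hw]
  rcases eq_or_ne z 0 with rfl | hz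
  · rcases eq_or_ne w 0 with rfl | hw
    · simp
    · simp [zero_cpow hw]
  have hr' : (r : ℂ) ≠ 0 := ofReal_ne_zero.mpr hr.ne'
  rw [cpow_def_of_ne_zero (mul_ne_zero hr' hz), cpow_def_of_ne_zero hr', cpow_def_of_ne_zero hz,
    log_ofReal_mul hr hz, ← exp_add, ofReal_log hr.le, add_mul]

theorem ofReal_mul_exp_I_mul_cpow {r : ℝ} (hr : 0 ≤ r) {φ : ℝ}
    (hφ : φ ∈ Set.Ioc (-Real.pi) Real.pi) (q : ℝ) :
    ((r : ℂ) * exp (I * φ)) ^ (q : ℂ) = ((r ^ q : ℝ) : ℂ) * exp (I * (q * φ : ℝ)) := by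
  rw [ofReal_mul_cpow hr, ofReal_cpow hr, exp_cpow (by simpa using hφ.1) (by simpa using hφ.2)]
  push_cast
  ring_nf

end Complex

/-- Removing the common phase factor: for nonzero real `p`, positive amplitudes `A, B`,
and a phase `θ` with `θ` and `p·θ` both in `(-π, π]`, the Hölder–Minkowski operation
factors the phase out: `((A e^{iθ})^p + (B e^{iθ})^p)^(1/p) = (A^p + B^p)^(1/p) e^{iθ}`
(principal-branch complex powers, real powers on the amplitudes). -/
theorem holder_minkowski_phase_factor
    (p A B θ : ℝ) (hp : p ≠ 0) (hA : 0 < A) (hB : 0 < B)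
    (hθ : θ ∈ Set.Ioc (-Real.pi) Real.pi)
    (hpθ : p * θ ∈ Set.Ioc (-Real.pi) Real.pi) :
    (((A : ℂ) * Complex.exp (Complex.I * (θ : ℂ))) ^ (p : ℂ) +
        ((B : ℂ) * Complex.exp (Complex.I * (θ : ℂ))) ^ (p : ℂ)) ^ ((1 / p : ℝ) : ℂ) =
      (((A ^ p + B ^ p) ^ (1 / p) : ℝ) : ℂ) * Complex.exp (Complex.I * (θ : ℂ)) := by
  have hsum : 0 ≤ A ^ p + B ^ p := by positivity
  rw [ofReal_mul_exp_I_mul_cpow hA.le hθ, ofReal_mul_exp_I_mul_cpow hB.le hθ, ← add_mul,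
    ← ofReal_add, ofReal_mul_exp_I_mul_cpow hsum hpθ, one_div, inv_mul_cancel_left₀ hp]
end
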